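/- Let k ≥ 1 and ℓ ≥ 0 be integers and let P ∈ K[T] be a polynomial of degree at most ℓ over a number field K. Then c^{-1} H(P)^k ≤ H(P·E_{k-1}) ≤ c H(P)^k, where c > 0 depends only on k and ℓ, E_{k-1} is the space of polynomials of degree ≤ k−1, P·E_{k-1} is the subspace {PQ : deg Q ≤ k−1} of polynomials of degree ≤ k+ℓ−1, and H(V) denotes the height of a subspace V (the height of its Plücker coordinates). -/

import Mathlib

/-!
At a place `v` of weight `e_v`, every `k × k` minor of the matrix whose rows are the coefficient
vectors of `P, XP, …, X^{k-1}P` is a sum of `k!` products of `k` coefficients of `P`, hence at most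
`(2^{k!})^{e_v} ‖P‖_v^k`; the factor `2^{e_v}` comes from Artin's tensor-power trick
`v(x + y) ≤ 2^{e_v} max(v x, v y)`. Conversely, each `P_m^k` is an integer combination of these
minors with coefficients depending only on `k` and `ℓ`: multiplying `∏_r P(Y_r)` by the Vandermonde
determinant `∏_{r<s} (Y_s - Y_r)` does not shrink the `ℤ`-span of the coefficients, and by
Cauchy–Binet the coefficients of the product are exactly the minors. Since the weights `e_v` sum
to `1`, the local constants multiply to global ones.
-/

open Polynomial Finset

/-- An abstract family of normalized absolute values on a field `K`, indexed by a set
of "places" `ι`, satisfying the product formula.  This axiomatizes the places of a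
number field `K` of degree `d` over `ℚ`, normalized as in Bombieri–Vaaler: `e i = d_v/d`
is the local weight at an archimedean place (the weights sum to `1`), while `e i = 0`
at an ultrametric place. -/
structure PlaceData (K : Type*) [Field K] (ι : Type*) where
  /-- the normalized absolute value at each place -/
  v : ι → AbsoluteValue K ℝ
  /-- the local weight `d_v/d` at archimedean places, `0` at ultrametric places -/
  e : ι → ℝ
  e_nonneg : ∀ i, 0 ≤ e i
  e_sum : ∑ᶠ i, e i = 1
  /-- places of weight `0` are ultrametric -/
  ultra : ∀ i, e i = 0 → ∀ x y : K, v i (x + y) ≤ max (v i x) (v i y)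
  /-- at an archimedean place of weight `e i`, `|m·x| = m^{e i}·|x|` for natural `m` -/
  arch_nat : ∀ i, 0 < e i → ∀ (x : K) (m : ℕ), v i ((m : K) * x) ≤ (m : ℝ) ^ (e i) * v i x
  mulSupport_finite : ∀ x : K, x ≠ 0 → (Function.mulSupport fun i => v i x).Finite
  product_formula : ∀ x : K, x ≠ 0 → ∏ᶠ i, v i x = 1

variable {K : Type*} [Field K] {ι : Type*}

/-- the `v`-adic norm `‖P‖_v` of a polynomial: the maximal absolute value of its
coefficients. -/
noncomputable def PlaceData.polyNorm (pd : PlaceData K ι) (i : ι) (P : K[X]) : ℝ :=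
  (Finset.range (P.natDegree + 1)).sup' Finset.nonempty_range_add_one fun m => pd.v i (P.coeff m)

/-- the (absolute, multiplicative) height `H(P) = ∏_v ‖P‖_v` of a polynomial. -/
noncomputable def PlaceData.polyHeight (pd : PlaceData K ι) (P : K[X]) : ℝ :=
  ∏ᶠ i, pd.polyNorm i P

/-- The height of the subspace `P·E_{k-1} = {PQ : deg Q ≤ k-1}` of `E_{k+ℓ-1}`:
the height of the vector of `k×k` minors (Plücker coordinates) of the `k×(k+ℓ)`
matrix whose rows are the shifted coefficient vectors of `P`. -/
noncomputable def mulSubspaceHeight (pd : PlaceData K ι) (k ℓ : ℕ) (P : K[X]) : ℝ :=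
  letI R : Matrix (Fin k) (Fin (k + ℓ)) K := fun i j =>
    if (i : ℕ) ≤ (j : ℕ) ∧ (j : ℕ) ≤ ℓ + (i : ℕ) then P.coeff ((j : ℕ) - (i : ℕ)) else 0
  ∏ᶠ i : ι,
    ((Finset.univ : Finset (Fin k → Fin (k + ℓ))).sup
      fun c => Real.toNNReal (pd.v i ((R.submatrix id c).det)) : NNReal)

open Filter Topology Function

universe u v

theorem Matrix.det_mul_eq_sum_prod_mul_det_submatrix {m n R : Type*} [Fintype m] [DecidableEq m]
    [Fintype n] [CommRing R] (A : Matrix m n R) (B : Matrix n m R) :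
    (A * B).det = ∑ c : m → n, (∏ i, A i (c i)) * (B.submatrix c id).det := by
  have hrows : A * B = of fun i => ∑ j, A i j • B j := by
    ext i l
    simp [Matrix.mul_apply, Finset.sum_apply]
  calc (A * B).det = detRowAlternating fun i => ∑ j, A i j • B j := by rw [hrows]; rfl
    _ = ∑ c : m → n, detRowAlternating fun i => A i (c i) • B (c i) :=
      detRowAlternating.toMultilinearMap.map_sum _
    _ = _ := Finset.sum_congr rfl fun c _ =>
      detRowAlternating.toMultilinearMap.map_smul_univ (fun i => A i (c i)) (fun i => B (c i))

namespace MvPolynomial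

variable {σ R : Type*} [CommRing R]

def coeffSpan (p : MvPolynomial σ R) : Submodule ℤ R :=
  Submodule.span ℤ (Set.range fun γ => coeff γ p)

theorem coeff_mem_coeffSpan (p : MvPolynomial σ R) (γ : σ →₀ ℕ) : coeff γ p ∈ coeffSpan p :=
  Submodule.subset_span ⟨γ, rfl⟩

theorem coeffSpan_le_X_sub_X_mul [DecidableEq σ] {a b : σ} (hab : a ≠ b)
    (p : MvPolynomial σ R) : coeffSpan p ≤ coeffSpan ((X b - X a) * p) := by
  refine Submodule.span_le.2 ?_
  rintro _ ⟨γ, rfl⟩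
  -- downward induction on the exponent of `X b`, which is bounded by `degreeOf b p`
  suffices h : ∀ t γ, p.degreeOf b < γ b + t → coeff γ p ∈ coeffSpan ((X b - X a) * p) from
    h (p.degreeOf b + 1) γ (by omega)
  intro t
  induction t with
  | zero =>
    intro γ hγ
    rw [notMem_support_iff.1 (notMem_support_of_degreeOf_lt b hγ)]
    exact zero_mem _
  | succ t ih =>
    intro γ hγ
    have hsplit : coeff γ p = coeff (Finsupp.single b 1 + γ) ((X b - X a) * p)
        + coeff (Finsupp.single b 1 + γ) (X a * p) := by
      rw [sub_mul, coeff_sub, coeff_X_mul, sub_add_cancel]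
    rw [hsplit, coeff_X_mul']
    refine add_mem (coeff_mem_coeffSpan _ _) ?_
    split_ifs
    · exact ih _ (by simp [hab]; omega)
    · exact zero_mem _

theorem coeffSpan_le_prod_mul {α : Type*} {s : Finset α} {F : α → MvPolynomial σ R}
    (hF : ∀ x ∈ s, ∀ q, coeffSpan q ≤ coeffSpan (F x * q)) (p : MvPolynomial σ R) :
    coeffSpan p ≤ coeffSpan ((∏ x ∈ s, F x) * p) := by
  classical
  induction s using Finset.induction_on with
  | empty => simp
  | insert x s hx ih =>
    rw [prod_insert hx, mul_assoc]
    exact (ih fun y hy => hF y (mem_insert_of_mem hy)).trans (hF x (mem_insert_self x s) _)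

theorem coeffSpan_le_det_vandermonde_mul {k : ℕ} (p : MvPolynomial (Fin k) R) :
    coeffSpan p ≤ coeffSpan ((Matrix.vandermonde X).det * p) := by
  rw [Matrix.det_vandermonde]
  exact coeffSpan_le_prod_mul (fun i _ => coeffSpan_le_prod_mul fun j hj =>
    coeffSpan_le_X_sub_X_mul (mem_Ioi.1 hj).ne) p

theorem coeffSpan_sum_monomial_le {ι : Type*} (s : Finset ι) (μ : ι → σ →₀ ℕ) (x : ι → R) :
    coeffSpan (∑ c ∈ s, monomial (μ c) (x c)) ≤ Submodule.span ℤ (Set.range x) := by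
  classical
  refine Submodule.span_le.2 ?_
  rintro _ ⟨γ, rfl⟩
  dsimp only
  rw [coeff_sum]
  refine sum_mem fun c _ => ?_
  rw [coeff_monomial]
  split_ifs
  · exact Submodule.subset_span ⟨c, rfl⟩
  · exact zero_mem _

theorem coeff_prod_aeval_X [Fintype σ] [DecidableEq σ] (P : R[X]) (γ : σ → ℕ) :
    coeff (Finsupp.equivFunOnFinite.symm γ) (∏ r, Polynomial.aeval (X r) P)
      = ∏ r, P.coeff (γ r) := by
  set n := P.natDegree + 1 + ∑ r, γ r
  have hγ : ∀ r, γ r < n := fun r => by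
    have := single_le_sum (fun r _ => Nat.zero_le (γ r)) (mem_univ r); omega
  have hP : ∀ r : σ, Polynomial.aeval (X r) P
      = ∑ t ∈ range n, monomial (Finsupp.single r t) (P.coeff t) := fun r => by
    rw [aeval_eq_sum_range' (n := n) (by omega)]
    simp_rw [X_pow_eq_monomial, smul_monomial, smul_eq_mul, mul_one]
  simp_rw [hP, prod_univ_sum, ← monomial_sum_prod, ← Finsupp.equivFunOnFinite_symm_eq_sum,
    coeff_sum, coeff_monomial, Finsupp.equivFunOnFinite.symm.injective.eq_iff]
  rw [sum_ite_eq' _ γ]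
  exact if_pos (Fintype.mem_piFinset.2 fun r => mem_range.2 (hγ r))

end MvPolynomial

namespace Polynomial

variable {R : Type*} [CommRing R]

noncomputable def shiftedCoeffMatrix (k n : ℕ) (P : R[X]) : Matrix (Fin k) (Fin n) R :=
  Matrix.of fun i j => (X ^ (i : ℕ) * P).coeff j

theorem shiftedCoeffMatrix_map {S : Type*} [CommRing S] (f : R →+* S) (k n : ℕ) (P : R[X]) :
    (shiftedCoeffMatrix k n P).map f = shiftedCoeffMatrix k n (P.map f) := by
  ext i j
  simp [shiftedCoeffMatrix, ← coeff_map]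

theorem det_vandermonde_mul_prod_aeval_X {k ℓ : ℕ} {P : R[X]} (hP : P.natDegree ≤ ℓ) :
    (Matrix.vandermonde (MvPolynomial.X : Fin k → MvPolynomial (Fin k) R)).det
        * ∏ r, aeval (MvPolynomial.X r) P
      = ∑ c : Fin k → Fin (k + ℓ), MvPolynomial.monomial
          (Finsupp.equivFunOnFinite.symm fun r => (c r : ℕ))
          ((shiftedCoeffMatrix k (k + ℓ) P).submatrix id c).det := by
  set Y : Fin k → MvPolynomial (Fin k) R := MvPolynomial.X
  -- `P(Y r) * Y r ^ s = ∑ u, (X ^ s * P).coeff u * Y r ^ u`: after scaling its rows, the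
  -- Vandermonde matrix factors through the transposed shifted coefficient matrix
  have hfactor : (Matrix.of fun r s : Fin k => aeval (Y r) P * Y r ^ (s : ℕ))
      = Matrix.of (fun r (u : Fin (k + ℓ)) => Y r ^ (u : ℕ))
        * ((shiftedCoeffMatrix k (k + ℓ) P).map (MvPolynomial.C (σ := Fin k))).transpose := by
    refine Matrix.ext fun r s => ?_
    have hdeg : (X ^ (s : ℕ) * P).natDegree < k + ℓ :=
      natDegree_mul_le.trans_lt (by have := natDegree_X_pow_le (R := R) (s : ℕ); omega)
    rw [Matrix.of_apply, mul_comm, ← aeval_X_pow (R := R), ← map_mul, aeval_eq_sum_range' hdeg,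
      ← Fin.sum_univ_eq_sum_range, Matrix.mul_apply]
    refine sum_congr rfl fun u _ => ?_
    simp [shiftedCoeffMatrix, MvPolynomial.smul_eq_C_mul, mul_comm]
  rw [mul_comm, ← Matrix.det_mul_column]
  change (Matrix.of fun r s : Fin k => aeval (Y r) P * Y r ^ (s : ℕ)).det = _
  rw [hfactor, Matrix.det_mul_eq_sum_prod_mul_det_submatrix]
  refine sum_congr rfl fun c _ => ?_
  rw [← Matrix.transpose_submatrix, Matrix.det_transpose, Matrix.submatrix_map,
    ← RingHom.mapMatrix_apply, ← RingHom.map_det]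
  simp only [Matrix.of_apply, Y, MvPolynomial.X_pow_eq_monomial, ← MvPolynomial.monomial_sum_one,
    ← Finsupp.equivFunOnFinite_symm_eq_sum]
  rw [mul_comm, MvPolynomial.C_mul_monomial, mul_one]

theorem coeff_pow_mem_span_det_submatrix_shiftedCoeffMatrix {k ℓ : ℕ} {P : R[X]}
    (hP : P.natDegree ≤ ℓ) (m : ℕ) :
    P.coeff m ^ k ∈ Submodule.span ℤ (Set.range fun c : Fin k → Fin (k + ℓ) =>
      ((shiftedCoeffMatrix k (k + ℓ) P).submatrix id c).det) := by
  have hG := MvPolynomial.coeff_prod_aeval_X P fun _ : Fin k => m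
  rw [prod_const, card_univ, Fintype.card_fin] at hG
  rw [← hG]
  apply MvPolynomial.coeffSpan_sum_monomial_le univ
    fun c : Fin k → Fin (k + ℓ) => Finsupp.equivFunOnFinite.symm fun r => (c r : ℕ)
  rw [← det_vandermonde_mul_prod_aeval_X hP]
  exact MvPolynomial.coeffSpan_le_det_vandermonde_mul _ (MvPolynomial.coeff_mem_coeffSpan _ _)

noncomputable def genericPoly (ℓ : ℕ) : (MvPolynomial ℕ ℤ)[X] :=
  ∑ t ∈ range (ℓ + 1), C (MvPolynomial.X t) * X ^ t

theorem natDegree_genericPoly_le (ℓ : ℕ) : (genericPoly ℓ).natDegree ≤ ℓ :=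
  natDegree_sum_le_of_forall_le _ _ fun t ht =>
    (natDegree_C_mul_X_pow_le _ t).trans (Nat.lt_succ_iff.1 (mem_range.1 ht))

theorem genericPoly_map {ℓ : ℕ} {P : R[X]} (hP : P.natDegree ≤ ℓ) :
    (genericPoly ℓ).map (MvPolynomial.eval₂Hom (Int.castRingHom R) P.coeff) = P := by
  simp only [genericPoly, Polynomial.map_sum, Polynomial.map_mul, map_C, Polynomial.map_pow, map_X,
    MvPolynomial.coe_eval₂Hom, MvPolynomial.eval₂_X]
  exact (as_sum_range_C_mul_X_pow' P (Nat.lt_succ_of_le hP)).symm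

theorem exists_sum_zsmul_det_eq_coeff_pow (k ℓ m : ℕ) :
    ∃ n : (Fin k → Fin (k + ℓ)) → ℤ, ∀ {R : Type u} [CommRing R] (P : R[X]), P.natDegree ≤ ℓ →
      ∑ c, n c • ((shiftedCoeffMatrix k (k + ℓ) P).submatrix id c).det = P.coeff m ^ k := by
  obtain ⟨n, hn⟩ := (Submodule.mem_span_range_iff_exists_fun ℤ).1
    (coeff_pow_mem_span_det_submatrix_shiftedCoeffMatrix (natDegree_genericPoly_le ℓ) m (k := k))
  refine ⟨n, fun {R} _ P hP => ?_⟩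
  have := congrArg (MvPolynomial.eval₂Hom (Int.castRingHom R) P.coeff) hn
  simpa only [map_sum, map_zsmul, RingHom.map_det, RingHom.mapMatrix_apply, ← Matrix.submatrix_map,
    shiftedCoeffMatrix_map, map_pow, ← coeff_map, genericPoly_map hP] using this

theorem exists_det_submatrix_shiftedCoeffMatrix_ne_zero {R : Type*} [CommRing R]
    [IsDomain R] {k ℓ : ℕ} {P : R[X]} (hP : P ≠ 0) (hd : P.natDegree ≤ ℓ) :
    ∃ c : Fin k → Fin (k + ℓ), ((shiftedCoeffMatrix k (k + ℓ) P).submatrix id c).det ≠ 0 := by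
  obtain ⟨n, hn⟩ := exists_sum_zsmul_det_eq_coeff_pow k ℓ P.natDegree
  by_contra! h
  have := hn P hd
  simp only [h, smul_zero, sum_const_zero, coeff_natDegree] at this
  exact pow_ne_zero k (leadingCoeff_ne_zero.2 hP) this.symm

end Polynomial

theorem le_of_forall_pow_le_succ_mul_pow {a b : ℝ} (hb : 0 ≤ b)
    (h : ∀ n : ℕ, a ^ n ≤ (n + 1) * b ^ n) : a ≤ b := by
  by_contra! hba
  have hb0 : 0 < b := hb.lt_of_ne fun hb0 => by
    have := h 1
    rw [← hb0] at this
    norm_num at this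
    linarith
  have hr : 1 < a / b := (one_lt_div hb0).2 hba
  have hlim : Tendsto (fun n : ℕ => ((n : ℝ) + 1) / (a / b) ^ n) atTop (𝓝 0) := by
    simpa [add_div] using (tendsto_pow_const_div_const_pow_of_one_lt 1 hr).add
      (tendsto_inv_atTop_zero.comp (tendsto_pow_atTop_atTop_of_one_lt hr))
  obtain ⟨n, hn⟩ := (hlim.eventually (gt_mem_nhds one_pos)).exists
  rw [div_lt_one (pow_pos (one_pos.trans hr) n), div_pow, lt_div_iff₀ (pow_pos hb0 n)] at hn
  linarith [h n]

theorem AbsoluteValue.add_le_two_rpow_mul_max {R : Type*} [CommRing R] [Nontrivial R]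
    (v : AbsoluteValue R ℝ) {e : ℝ} (he : 0 ≤ e) (hv : ∀ n : ℕ, v n ≤ (n : ℝ) ^ e) (x y : R) :
    v (x + y) ≤ 2 ^ e * max (v x) (v y) := by
  set M := max (v x) (v y)
  have hM : 0 ≤ M := le_max_of_le_left (v.nonneg x)
  refine le_of_forall_pow_le_succ_mul_pow (by positivity) fun n => ?_
  have hterm : ∀ j ∈ range (n + 1), v (x ^ j * y ^ (n - j) * n.choose j) ≤ (2 ^ e * M) ^ n := by
    intro j hj
    have hchoose : v (n.choose j : R) ≤ ((2 : ℝ) ^ n) ^ e :=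
      (hv _).trans (Real.rpow_le_rpow (Nat.cast_nonneg _)
        (by exact_mod_cast Nat.choose_le_two_pow n j) he)
    have hxy : v x ^ j * v y ^ (n - j) ≤ M ^ n := by
      calc v x ^ j * v y ^ (n - j) ≤ M ^ j * M ^ (n - j) := by
            gcongr
            exacts [le_max_left _ _, le_max_right _ _]
        _ = M ^ n := by rw [← pow_add, Nat.add_sub_cancel' (Nat.lt_succ_iff.1 (mem_range.1 hj))]
    rw [map_mul, map_mul, map_pow, map_pow, mul_pow, Real.rpow_pow_comm zero_le_two, mul_comm]
    exact mul_le_mul hchoose hxy (by positivity) (by positivity)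
  calc v (x + y) ^ n = v (∑ j ∈ range (n + 1), x ^ j * y ^ (n - j) * n.choose j) := by
        rw [← map_pow, add_pow]
    _ ≤ ∑ j ∈ range (n + 1), v (x ^ j * y ^ (n - j) * n.choose j) := v.sum_le _ _
    _ ≤ ∑ j ∈ range (n + 1), (2 ^ e * M) ^ n := sum_le_sum hterm
    _ = (n + 1) * (2 ^ e * M) ^ n := by simp

namespace PlaceData

variable (pd : PlaceData K ι)

theorem finite_support_e : (support pd.e).Finite := by
  by_contra h
  have := pd.e_sum
  rw [finsum_of_infinite_support h] at this
  exact zero_ne_one this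

theorem finprod_le_mul_finprod {f g : ι → ℝ} {C : ℝ} (hC : 0 < C) (hf : (mulSupport f).Finite)
    (hg : (mulSupport g).Finite) (hf0 : ∀ i, 0 ≤ f i) (hfg : ∀ i, f i ≤ C ^ pd.e i * g i) :
    ∏ᶠ i, f i ≤ C * ∏ᶠ i, g i := by
  classical
  set T := hf.toFinset ∪ hg.toFinset ∪ pd.finite_support_e.toFinset
  have he : ∑ i ∈ T, pd.e i = 1 := by
    rw [← pd.e_sum, finsum_eq_sum_of_support_subset (s := T) _ fun i hi => by simp [T, hi]]
  rw [finprod_eq_prod_of_mulSupport_subset (s := T) f fun i hi => by simp [T, hi],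
    finprod_eq_prod_of_mulSupport_subset (s := T) g fun i hi => by simp [T, hi]]
  calc ∏ i ∈ T, f i ≤ ∏ i ∈ T, C ^ pd.e i * g i := prod_le_prod (fun i _ => hf0 i) fun i _ => hfg i
    _ = C * ∏ i ∈ T, g i := by rw [prod_mul_distrib, ← Real.rpow_sum_of_pos hC, he, Real.rpow_one]

theorem finite_mulSupport_sup' {J : Type*} (s : Finset J) (hs : s.Nonempty) (x : J → K)
    (hx : ∃ j ∈ s, x j ≠ 0) : (mulSupport fun i => s.sup' hs fun j => pd.v i (x j)).Finite := by
  classical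
  refine ((s.filter (x · ≠ 0)).finite_toSet.biUnion fun j hj =>
    pd.mulSupport_finite _ (mem_filter.1 hj).2).subset fun i hi => ?_
  by_contra hni
  simp only [coe_filter, Set.mem_iUnion, mem_mulSupport, not_exists, not_not] at hni
  obtain ⟨j₀, hj₀, hxj₀⟩ := hx
  refine hi (le_antisymm (sup'_le _ _ fun j hj => ?_) ((hni j₀ ⟨hj₀, hxj₀⟩).symm.le.trans
    (le_sup' (fun j => pd.v i (x j)) hj₀)))
  by_cases hxj : x j = 0
  · simp [hxj]
  · exact (hni j ⟨hj, hxj⟩).le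

variable (i : ι)

theorem natCast_le (n : ℕ) : pd.v i n ≤ (n : ℝ) ^ pd.e i := by
  rcases (pd.e_nonneg i).eq_or_lt with he | he
  · rw [← he, Real.rpow_zero]
    induction n with
    | zero => simp
    | succ n ih =>
      push_cast
      exact (pd.ultra i he.symm _ _).trans (max_le ih (by simp))
  · simpa using pd.arch_nat i he 1 n

theorem add_le (x y : K) : pd.v i (x + y) ≤ 2 ^ pd.e i * max (pd.v i x) (pd.v i y) :=
  (pd.v i).add_le_two_rpow_mul_max (pd.e_nonneg i) (pd.natCast_le i) x y

theorem sum_le {α : Type*} (s : Finset α) (f : α → K) {M : ℝ} (hM : 0 ≤ M)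
    (hf : ∀ a ∈ s, pd.v i (f a) ≤ M) : pd.v i (∑ a ∈ s, f a) ≤ ((2 : ℝ) ^ #s) ^ pd.e i * M := by
  classical
  induction s using Finset.induction_on with
  | empty => simpa using hM
  | insert a s ha ih =>
    have hone : 1 ≤ ((2 : ℝ) ^ #s) ^ pd.e i :=
      Real.one_le_rpow (one_le_pow₀ one_le_two) (pd.e_nonneg i)
    rw [sum_insert ha, card_insert_of_notMem ha, pow_succ, mul_comm _ (2 : ℝ),
      Real.mul_rpow zero_le_two (by positivity), mul_assoc]
    refine (pd.add_le i _ _).trans (mul_le_mul_of_nonneg_left (max_le ?_ ?_) (by positivity))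
    · exact (hf a (mem_insert_self a s)).trans (le_mul_of_one_le_left hM hone)
    · exact ih fun b hb => hf b (mem_insert_of_mem hb)

theorem zsmul_le (n : ℤ) (x : K) : pd.v i (n • x) ≤ (n.natAbs : ℝ) ^ pd.e i * pd.v i x := by
  rw [zsmul_eq_mul, map_mul, ← (pd.v i).apply_natAbs_eq]
  exact mul_le_mul_of_nonneg_right (pd.natCast_le i _) ((pd.v i).nonneg x)

theorem sum_zsmul_le {α : Type*} (s : Finset α) (n : α → ℤ) (x : α → K) {B : ℕ}
    (hB : ∀ a ∈ s, (n a).natAbs ≤ B) {M : ℝ} (hM : 0 ≤ M) (hx : ∀ a ∈ s, pd.v i (x a) ≤ M) :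
    pd.v i (∑ a ∈ s, n a • x a) ≤ ((2 : ℝ) ^ #s * B) ^ pd.e i * M := by
  rw [Real.mul_rpow (by positivity) (by positivity), mul_assoc]
  refine pd.sum_le i s _ (by positivity) fun a ha => (pd.zsmul_le i _ _).trans ?_
  exact mul_le_mul (Real.rpow_le_rpow (Nat.cast_nonneg _) (by exact_mod_cast hB a ha)
    (pd.e_nonneg i)) (hx a ha) ((pd.v i).nonneg _) (by positivity)

theorem det_le {n : Type*} [Fintype n] [DecidableEq n] (A : Matrix n n K) {M : ℝ} (hM : 0 ≤ M)
    (hA : ∀ r s, pd.v i (A r s) ≤ M) :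
    pd.v i A.det ≤ ((2 : ℝ) ^ (Fintype.card n).factorial) ^ pd.e i * M ^ Fintype.card n := by
  rw [Matrix.det_apply, ← Fintype.card_perm, ← card_univ]
  refine pd.sum_le i _ _ (by positivity) fun σ _ => ?_
  rw [AbsoluteValue.map_units_int_smul, map_prod]
  calc ∏ r, pd.v i (A (σ r) r) ≤ ∏ _r : n, M :=
        prod_le_prod (fun _ _ => (pd.v i).nonneg _) fun r _ => hA _ _
    _ = M ^ Fintype.card n := by simp


theorem coeff_le_polyNorm (P : K[X]) (m : ℕ) : pd.v i (P.coeff m) ≤ pd.polyNorm i P := by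
  by_cases hm : m ≤ P.natDegree
  · exact le_sup' (fun m => pd.v i (P.coeff m)) (mem_range.2 (Nat.lt_succ_of_le hm))
  · rw [coeff_eq_zero_of_natDegree_lt (not_le.1 hm), map_zero]
    exact ((pd.v i).nonneg _).trans
      (le_sup' (fun m => pd.v i (P.coeff m)) (mem_range.2 P.natDegree.succ_pos))

theorem polyNorm_nonneg (P : K[X]) : 0 ≤ pd.polyNorm i P :=
  ((pd.v i).nonneg _).trans (pd.coeff_le_polyNorm i P 0)

theorem finite_mulSupport_polyNorm {P : K[X]} (hP : P ≠ 0) :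
    (mulSupport fun i => pd.polyNorm i P).Finite :=
  pd.finite_mulSupport_sup' _ _ _ ⟨P.natDegree, self_mem_range_succ _, leadingCoeff_ne_zero.2 hP⟩

theorem polyHeight_nonneg (P : K[X]) : 0 ≤ pd.polyHeight P :=
  finprod_nonneg fun i => pd.polyNorm_nonneg i P

section minorNorm

variable {m n : Type*} [Fintype m] [DecidableEq m] [Fintype n]

noncomputable def minorNorm (A : Matrix m n K) : ℝ :=
  ((univ.sup fun c : m → n => Real.toNNReal (pd.v i (A.submatrix id c).det) : NNReal) : ℝ)

theorem minorNorm_eq_sup' [Nonempty (m → n)] (A : Matrix m n K) :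
    pd.minorNorm i A = univ.sup' univ_nonempty fun c : m → n => pd.v i (A.submatrix id c).det := by
  rw [minorNorm, ← sup'_eq_sup univ_nonempty, apply_sup'_eq_sup'_comp _ _ NNReal.coe_max]
  exact sup'_congr _ rfl fun c _ => Real.coe_toNNReal _ ((pd.v i).nonneg _)

theorem le_minorNorm (A : Matrix m n K) (c : m → n) :
    pd.v i (A.submatrix id c).det ≤ pd.minorNorm i A :=
  (Real.le_coe_toNNReal _).trans (NNReal.coe_le_coe.2 (le_sup (f := fun c : m → n =>
    Real.toNNReal (pd.v i (A.submatrix id c).det)) (mem_univ c)))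

theorem minorNorm_le (A : Matrix m n K) {b : ℝ} (hb : 0 ≤ b)
    (h : ∀ c : m → n, pd.v i (A.submatrix id c).det ≤ b) : pd.minorNorm i A ≤ b :=
  (NNReal.coe_le_coe.2 (Finset.sup_le fun c _ => Real.toNNReal_mono (h c))).trans_eq
    (Real.coe_toNNReal b hb)

theorem finite_mulSupport_minorNorm [Nonempty (m → n)] (A : Matrix m n K)
    (hA : ∃ c : m → n, (A.submatrix id c).det ≠ 0) :
    (mulSupport fun i => pd.minorNorm i A).Finite := by
  simp_rw [pd.minorNorm_eq_sup']
  obtain ⟨c, hc⟩ := hA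
  exact pd.finite_mulSupport_sup' _ _ _ ⟨c, mem_univ c, hc⟩

end minorNorm

theorem minorNorm_shiftedCoeffMatrix_le (k n : ℕ) (P : K[X]) :
    pd.minorNorm i (shiftedCoeffMatrix k n P)
      ≤ ((2 : ℝ) ^ k.factorial) ^ pd.e i * pd.polyNorm i P ^ k := by
  have hN := pd.polyNorm_nonneg i P
  refine pd.minorNorm_le i _ (by positivity) fun c => ?_
  simpa using pd.det_le i ((shiftedCoeffMatrix k n P).submatrix id c) hN fun r s => by
    simp only [Matrix.submatrix_apply, shiftedCoeffMatrix, Matrix.of_apply, id, coeff_X_pow_mul']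
    split_ifs
    · exact pd.coeff_le_polyNorm i P _
    · simpa using hN

end PlaceData

instance (k ℓ : ℕ) : Nonempty (Fin k → Fin (k + ℓ)) := ⟨Fin.castLE (Nat.le_add_right k ℓ)⟩

theorem mulSubspaceHeight_eq_finprod_minorNorm (pd : PlaceData K ι) {k ℓ : ℕ} {P : K[X]}
    (hP : P.natDegree ≤ ℓ) :
    mulSubspaceHeight pd k ℓ P = ∏ᶠ i, pd.minorNorm i (shiftedCoeffMatrix k (k + ℓ) P) := by
  have hband : (fun (r : Fin k) (s : Fin (k + ℓ)) =>
      if (r : ℕ) ≤ s ∧ (s : ℕ) ≤ ℓ + r then P.coeff (s - r) else 0)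
        = shiftedCoeffMatrix k (k + ℓ) P := by
    funext r s
    simp only [shiftedCoeffMatrix, Matrix.of_apply, coeff_X_pow_mul']
    split_ifs <;> try rfl
    · omega
    · exact (coeff_eq_zero_of_natDegree_lt (p := P) (by omega)).symm
  rw [mulSubspaceHeight, hband]
  rfl

theorem exists_polyNorm_pow_le_minorNorm (k ℓ : ℕ) :
    ∃ C : ℝ, 0 < C ∧ ∀ {K : Type u} {ι : Type v} [Field K] (pd : PlaceData K ι) (i : ι)
      (P : K[X]), P.natDegree ≤ ℓ →
        pd.polyNorm i P ^ k ≤ C ^ pd.e i * pd.minorNorm i (shiftedCoeffMatrix k (k + ℓ) P) := by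
  choose n hn using fun m => exists_sum_zsmul_det_eq_coeff_pow.{u} k ℓ m
  set B := (range (ℓ + 1)).sup fun m => univ.sup fun c => (n m c).natAbs
  refine ⟨2 ^ #(univ : Finset (Fin k → Fin (k + ℓ))) * (B + 1 : ℕ), by positivity,
    fun pd i P hP => ?_⟩
  obtain ⟨m, hm, hmax⟩ := exists_mem_eq_sup' nonempty_range_add_one fun m => pd.v i (P.coeff m)
  have hmℓ : m ∈ range (ℓ + 1) := mem_range.2 (Nat.lt_succ_of_le
    ((Nat.lt_succ_iff.1 (mem_range.1 hm)).trans hP))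
  rw [PlaceData.polyNorm, hmax, ← map_pow, ← hn m P hP]
  refine pd.sum_zsmul_le i univ _ _ (fun c _ => ?_) (NNReal.coe_nonneg _) fun c _ =>
    pd.le_minorNorm i _ c
  exact Nat.le_succ_of_le (le_sup_of_le hmℓ (le_sup (f := fun c => (n m c).natAbs) (mem_univ c)))

theorem exists_polyHeight_pow_le_mul_mulSubspaceHeight (k ℓ : ℕ) :
    ∃ C : ℝ, 0 < C ∧ ∀ {K : Type u} {ι : Type v} [Field K] (pd : PlaceData K ι) (P : K[X]),
      P ≠ 0 → P.natDegree ≤ ℓ → pd.polyHeight P ^ k ≤ C * mulSubspaceHeight pd k ℓ P := by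
  obtain ⟨C, hC, hloc⟩ := exists_polyNorm_pow_le_minorNorm.{u, v} k ℓ
  refine ⟨C, hC, fun pd P hP hd => ?_⟩
  have hN := pd.finite_mulSupport_polyNorm hP
  rw [PlaceData.polyHeight, finprod_pow hN, mulSubspaceHeight_eq_finprod_minorNorm pd hd]
  exact pd.finprod_le_mul_finprod hC (hN.subset (mulSupport_pow _ _))
    (pd.finite_mulSupport_minorNorm _ (exists_det_submatrix_shiftedCoeffMatrix_ne_zero hP hd))
    (fun i => pow_nonneg (pd.polyNorm_nonneg i P) k) fun i => hloc pd i P hd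

theorem mulSubspaceHeight_le_polyHeight_pow (pd : PlaceData K ι) {k ℓ : ℕ} {P : K[X]}
    (hP : P ≠ 0) (hd : P.natDegree ≤ ℓ) :
    mulSubspaceHeight pd k ℓ P ≤ 2 ^ k.factorial * pd.polyHeight P ^ k := by
  have hN := pd.finite_mulSupport_polyNorm hP
  rw [PlaceData.polyHeight, finprod_pow hN, mulSubspaceHeight_eq_finprod_minorNorm pd hd]
  exact pd.finprod_le_mul_finprod (by positivity)
    (pd.finite_mulSupport_minorNorm _ (exists_det_submatrix_shiftedCoeffMatrix_ne_zero hP hd))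
    (hN.subset (mulSupport_pow _ _)) (fun i => NNReal.coe_nonneg _)
    fun i => pd.minorNorm_shiftedCoeffMatrix_le i k (k + ℓ) P

theorem stmt6_general (pd : PlaceData K ι) (k ℓ : ℕ) :
    ∃ c : ℝ, 0 < c ∧
      ∀ P : K[X], P ≠ 0 → P.natDegree ≤ ℓ →
        c⁻¹ * pd.polyHeight P ^ k ≤ mulSubspaceHeight pd k ℓ P ∧
        mulSubspaceHeight pd k ℓ P ≤ c * pd.polyHeight P ^ k := by
  obtain ⟨C, hC, hlower⟩ := exists_polyHeight_pow_le_mul_mulSubspaceHeight k ℓ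
  have hc : 0 < max C (2 ^ k.factorial) := hC.trans_le (le_max_left _ _)
  refine ⟨max C (2 ^ k.factorial), hc, fun P hP hd => ⟨?_, ?_⟩⟩
  · rw [inv_mul_le_iff₀ hc]
    exact (hlower pd P hP hd).trans (mul_le_mul_of_nonneg_right (le_max_left _ _)
      (finprod_nonneg fun _ => NNReal.coe_nonneg _))
  · exact (mulSubspaceHeight_le_polyHeight_pow pd hP hd).trans (mul_le_mul_of_nonneg_right
      (le_max_right _ _) (pow_nonneg (pd.polyHeight_nonneg P) k))

/-- Proposition 5.2.  Let `k ≥ 1`, `ℓ ≥ 0`.  There is a constant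
`c > 0`, depending only on `k` and `ℓ`, such that every nonzero `P ∈ K[T]` of degree at
most `ℓ` over the number field `K` (axiomatized by `PlaceData`) satisfies
`c⁻¹ H(P)^k ≤ H(P·E_{k-1}) ≤ c H(P)^k`. -/
theorem stmt6 (pd : PlaceData K ι) (k ℓ : ℕ) (hk : 1 ≤ k) :
    ∃ c : ℝ, 0 < c ∧
      ∀ P : K[X], P ≠ 0 → P.natDegree ≤ ℓ →
        c⁻¹ * pd.polyHeight P ^ k ≤ mulSubspaceHeight pd k ℓ P ∧
        mulSubspaceHeight pd k ℓ P ≤ c * pd.polyHeight P ^ k :=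
  stmt6_general pd k ℓ
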